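/- arXiv:1507.01078 — 2 statements merged into one kernel-verified Lean document; each statement's English description precedes it below -/
import Mathlib

section
/- Let W be a group generated by a normal subgroup I together with a single element Fr, and let ρ : W → GL(V) be a finite-dimensional irreducible complex representation that is trivial on a subgroup J ⊴ W with J ≤ I and I/J finite. Then there exist a positive integer d, a group homomorphism χ : W → ℂˣ that is trivial on I, and a representation τ of W that is trivial on the normal subgroup generated by Fr^d and J, such that ρ(w) = χ(w) · τ(w) for all w ∈ W. -/
/-!
Conjugation by `Fr` acts on the finite group `I/J` through a finite automorphism group, so some
power `Fr ^ d` centralises `I` modulo `J`. Since `ρ` kills `J` and `W` is generated by `I` and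
`Fr`, `ρ (Fr ^ d)` commutes with the whole image of `ρ`, hence is a scalar `μ` by Schur's lemma.
If `W/I` is infinite, it is infinite cyclic on the image of `Fr`, so some character `χ` trivial
on `I` has `χ Fr ^ d = μ`, and `τ = χ⁻¹ ⊗ ρ` kills `Fr ^ d` and `J`. If `W/I` is finite, a power
of `Fr` already lies in `J`, and `χ = 1`, `τ = ρ` will do.
-/

open Subgroup
open scoped commutatorElement

theorem Subgroup.exists_pow_mem_centralizer_of_finite {G : Type*} [Group G] (N : Subgroup G)
    [N.Normal] [Finite N] (g : G) : ∃ d, 0 < d ∧ g ^ d ∈ centralizer N := by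
  obtain ⟨d, hd, -, hker⟩ := exists_pow_mem_of_index_ne_zero
    (finiteIndex_ker (MulAut.conjNormal (H := N))).index_ne_zero g
  refine ⟨d, hd, fun h hh => ?_⟩
  have := congrArg Subtype.val (DFunLike.congr_fun (MonoidHom.mem_ker.mp hker) ⟨h, hh⟩)
  rw [MulAut.conjNormal_apply, MulAut.one_apply] at this
  exact (mul_inv_eq_iff_eq_mul.mp this).symm

theorem exists_pow_commutatorElement_mem {G : Type*} [Group G] (I J : Subgroup G) [I.Normal]
    [J.Normal] [Finite (I ⧸ J.subgroupOf I)] (g : G) :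
    ∃ d, 0 < d ∧ ∀ x ∈ I, ⁅g ^ d, x⁆ ∈ J := by
  have : (I.map (QuotientGroup.mk' J)).Normal := ‹I.Normal›.map _ (QuotientGroup.mk'_surjective J)
  have : Finite (I.map (QuotientGroup.mk' J)) := by
    rw [← MonoidHom.domRestrict_range]
    have hker : ((QuotientGroup.mk' J).domRestrict I).ker = J.subgroupOf I := by
      rw [MonoidHom.ker_domRestrict, QuotientGroup.ker_mk']
    exact Finite.of_equiv _ ((QuotientGroup.quotientMulEquivOfEq hker).symm.trans
      (QuotientGroup.quotientKerEquivRange _)).toEquiv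
  obtain ⟨d, hd, hcentral⟩ :=
    (I.map (QuotientGroup.mk' J)).exists_pow_mem_centralizer_of_finite (g : G ⧸ J)
  refine ⟨d, hd, fun x hx => ?_⟩
  rw [← QuotientGroup.eq_one_iff, ← QuotientGroup.mk'_apply, map_commutatorElement, map_pow,
    commutatorElement_eq_one_iff_commute]
  exact (hcentral _ (mem_map_of_mem _ hx)).symm

theorem MonoidHom.commute_apply_of_closure_eq_top {G H : Type*} [Group G] [Group H] (f : G →* H)
    {s : Set G} (hs : closure s = ⊤) {h : H} (hh : ∀ x ∈ s, Commute h (f x)) (w : G) :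
    Commute h (f w) := by
  have : closure s ≤ (centralizer {h}).comap f :=
    (closure_le _).mpr fun x hx => mem_centralizer_singleton_iff.mpr (hh x hx).eq.symm
  exact (mem_centralizer_singleton_iff.mp (this (hs ▸ mem_top w))).symm

theorem MonoidHom.map_eq_one_of_mem_normalClosure {G H : Type*} [Group G] [Group H] (f : G →* H)
    {s : Set G} (hs : ∀ x ∈ s, f x = 1) {x : G} (hx : x ∈ normalClosure s) : f x = 1 :=
  normalClosure_le_normal (N := f.ker) hs hx

theorem Module.End.exists_eq_algebraMap_of_forall_commute {K V ι : Type*} [Field K]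
    [IsAlgClosed K] [AddCommGroup V] [Module K V] [FiniteDimensional K V] [Nontrivial V]
    (T : ι → Module.End K V) (hT : ∀ p : Submodule K V, (∀ i, ∀ v ∈ p, T i v ∈ p) → p = ⊥ ∨ p = ⊤)
    (f : Module.End K V) (hf : ∀ i, Commute f (T i)) : ∃ μ : K, f = algebraMap K _ μ := by
  obtain ⟨μ, hμ⟩ := exists_eigenvalue f
  have htop : f.eigenspace μ = ⊤ :=
    (hT _ fun i _ hv => mapsTo_genEigenspace_of_comm (hf i) μ 1 hv).resolve_left hμ
  exact ⟨μ, LinearMap.ext fun v => mem_eigenspace_iff.mp (htop ▸ Submodule.mem_top)⟩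

theorem zpowers_mk_eq_top_of_closure_union_eq_top {G : Type*} [Group G] (N : Subgroup G)
    [N.Normal] (g : G) (hg : closure ((N : Set G) ∪ {g}) = ⊤) : zpowers (g : G ⧸ N) = ⊤ := by
  rw [eq_top_iff, ← map_top_of_surjective _ (QuotientGroup.mk'_surjective N), ← hg,
    MonoidHom.map_closure, closure_le]
  rintro _ ⟨x, hx | rfl, rfl⟩
  · rw [QuotientGroup.mk'_apply, (QuotientGroup.eq_one_iff x).mpr hx]
    exact one_mem _
  · exact mem_zpowers _

theorem exists_monoidHom_of_infinite_cyclic_quotient {G A : Type*} [Group G] [Group A]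
    (N : Subgroup G) [N.Normal] [Infinite (G ⧸ N)] (g : G)
    (hg : closure ((N : Set G) ∪ {g}) = ⊤) (a : A) :
    ∃ χ : G →* A, (∀ x ∈ N, χ x = 1) ∧ χ g = a := by
  let e := intEquivOfZPowersEqTop _ (zpowers_mk_eq_top_of_closure_union_eq_top N g hg)
  refine ⟨(zpowersHom A a).comp (e.symm.toMonoidHom.comp (QuotientGroup.mk' N)),
    fun x hx => ?_, by simp [e]⟩
  simp [(QuotientGroup.eq_one_iff x).mpr hx]

namespace LinearMap.GeneralLinearGroup

variable {G K V : Type*} [Group G] [Field K] [AddCommGroup V] [Module K V]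

def twist (χ : G →* Kˣ) (ρ : G →* GeneralLinearGroup K V) : G →* GeneralLinearGroup K V where
  toFun g := χ g • ρ g
  map_one' := by simp
  map_mul' a b := Units.ext <| by simp [Units.smul_def, mul_smul, smul_comm (χ a : K)]

theorem coe_twist_apply (χ : G →* Kˣ) (ρ : G →* GeneralLinearGroup K V) (g : G) :
    (twist χ ρ g : Module.End K V) = (χ g : K) • (ρ g : Module.End K V) :=
  rfl

end LinearMap.GeneralLinearGroup

open LinearMap.GeneralLinearGroup

/-- If `W = ⟨I, Fr⟩` with `I ⊴ W`, `J ⊴ W`, `J ≤ I`, `I/J` finite, and `ρ` is an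
irreducible finite-dimensional complex representation of `W` trivial on `J`, then
`ρ = χ ⊗ τ` where `χ` is a character trivial on `I` (unramified) and `τ` is trivial on
the normal subgroup generated by `Fr^d` and `J`, for some `d ≥ 1`. -/
theorem irreducible_rep_unramified_twist_of_finite {W : Type*} [Group W]
    (I J : Subgroup W) [I.Normal] [J.Normal] (hJI : J ≤ I)
    (hfin : Finite (I ⧸ J.subgroupOf I)) (Fr : W)
    (hgen : Subgroup.closure ((I : Set W) ∪ {Fr}) = ⊤)
    {V : Type*} [AddCommGroup V] [Module ℂ V] [FiniteDimensional ℂ V] [Nontrivial V]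
    (ρ : W →* LinearMap.GeneralLinearGroup ℂ V)
    (hJtriv : ∀ x ∈ J, ρ x = 1)
    (hirr : ∀ p : Submodule ℂ V, (∀ w : W, ∀ v ∈ p, (ρ w : V →ₗ[ℂ] V) v ∈ p) → p = ⊥ ∨ p = ⊤) :
    ∃ (d : ℕ), 0 < d ∧ ∃ (χ : W →* ℂˣ) (τ : W →* LinearMap.GeneralLinearGroup ℂ V),
      (∀ x ∈ I, χ x = 1) ∧
      (∀ x ∈ Subgroup.normalClosure ({Fr ^ d} ∪ (J : Set W)), τ x = 1) ∧
      (∀ w : W, (ρ w : V →ₗ[ℂ] V) = (χ w : ℂ) • (τ w : V →ₗ[ℂ] V)) := by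
  by_cases hWI : Finite (W ⧸ I)
  · have hFrJ : Fr ^ (I.index * J.relIndex I) ∈ J := by
      rw [pow_mul]
      exact J.pow_relIndex_mem (I.pow_index_mem Fr)
    refine ⟨_, Nat.pos_of_ne_zero (mul_ne_zero (index_ne_zero_of_finite (H := I))
      (index_ne_zero_of_finite (H := J.subgroupOf I))), 1, ρ, fun _ _ => rfl,
      fun x => ρ.map_eq_one_of_mem_normalClosure ?_, fun w => by simp⟩
    rintro x (rfl | hx)
    exacts [hJtriv _ hFrJ, hJtriv x hx]
  have : Infinite (W ⧸ I) := not_finite_iff_infinite.mp hWI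
  obtain ⟨d, hd, hcomm⟩ := exists_pow_commutatorElement_mem I J Fr
  have hcentral (w : W) : Commute (ρ (Fr ^ d) : Module.End ℂ V) (ρ w) := by
    refine (ρ.commute_apply_of_closure_eq_top hgen ?_ w).units_val
    rintro x (hx | rfl)
    · rw [← commutatorElement_eq_one_iff_commute, ← map_commutatorElement]
      exact hJtriv _ (hcomm x hx)
    · rw [map_pow]
      exact (Commute.refl _).pow_left d
  obtain ⟨μ, hμ⟩ := Module.End.exists_eq_algebraMap_of_forall_commute _ hirr _ hcentral
  have hμ0 : μ ≠ 0 := by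
    rintro rfl
    exact (ρ (Fr ^ d)).ne_zero (by simpa using hμ)
  obtain ⟨z, hz⟩ := IsAlgClosed.exists_pow_nat_eq μ hd
  obtain ⟨χ, hχI, hχFr⟩ := exists_monoidHom_of_infinite_cyclic_quotient I Fr hgen
    (Units.mk0 z (by rintro rfl; exact hμ0 (by rw [← hz, zero_pow hd.ne'])))
  refine ⟨d, hd, χ, twist χ⁻¹ ρ, hχI, fun x => (twist χ⁻¹ ρ).map_eq_one_of_mem_normalClosure ?_,
    fun w => by simp [coe_twist_apply, smul_smul]⟩
  rintro x (rfl | hx) <;> ext1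
  · rw [coe_twist_apply, hμ, Algebra.algebraMap_eq_smul_one, smul_smul, MonoidHom.inv_apply,
      map_pow, hχFr]
    simp [hz, hμ0]
  · simp [coe_twist_apply, hχI x (hJI hx), hJtriv x hx]
end

section
/- Let G be a group, Z ≤ Z(G) a central subgroup, and W a group. Suppose the set of homomorphisms W → G/Z up to conjugacy is finite, and the set of homomorphisms W → Z up to multiplication by a fixed subgroup S ≤ Hom(W, Z) has finitely many orbits. Suppose moreover that Hom(W, Z) acts on Hom(W, G) by pointwise multiplication. Then the set of homomorphisms W → G, up to the combined equivalence of G-conjugacy and twisting by S, is finite. -/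
/-- Abstract finiteness skeleton: if `Z` is a central subgroup of `G`, homomorphisms
`W → G/Z` are finite up to conjugacy, and homomorphisms `W → Z` are finite up to
twisting by a subgroup `S` of `Hom(W, Z)`, then homomorphisms `W → G` are finite up
to the combined equivalence of `G`-conjugacy and twisting by `S`. -/
theorem finiteness_modulo_center_and_twists
    {G W : Type*} [Group G] [Group W] (Z : Subgroup G) [Z.Normal]
    (hZ : Z ≤ Subgroup.center G)
    (S : Set (W →* Z))
    (hS_one : (1 : W →* Z) ∈ S)
    (hS_mul : ∀ s₁ ∈ S, ∀ s₂ ∈ S, ∃ s₃ ∈ S, ∀ w : W, s₃ w = s₁ w * s₂ w)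
    (hS_inv : ∀ s ∈ S, ∃ s' ∈ S, ∀ w : W, s' w = (s w)⁻¹)
    (hfin1 : ∃ R : Set (W →* G ⧸ Z), R.Finite ∧
      ∀ f : W →* G ⧸ Z, ∃ g ∈ R, ∃ x : G ⧸ Z, ∀ w : W, f w = x * g w * x⁻¹)
    (hfin2 : ∃ R : Set (W →* Z), R.Finite ∧
      ∀ c : W →* Z, ∃ c' ∈ R, ∃ s ∈ S, ∀ w : W, c w = s w * c' w) :
    ∃ R : Set (W →* G), R.Finite ∧
      ∀ f : W →* G, ∃ g ∈ R, ∃ s ∈ S, ∃ x : G,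
        ∀ w : W, f w = x * (s w : G) * g w * x⁻¹ := by
  classical
  obtain ⟨R1, hR1fin, hR1⟩ := hfin1
  obtain ⟨R2, hR2fin, hR2⟩ := hfin2
  -- pointwise product of a hom into Z and a hom into G is a hom
  have key : ∀ (c : W →* Z) (ℓ : W →* G), ∃ h : W →* G, ∀ w, h w = (c w : G) * ℓ w := by
    intro c ℓ
    refine ⟨{ toFun := fun w => (c w : G) * ℓ w, map_one' := by simp,
              map_mul' := ?_ }, fun w => rfl⟩
    intro a b
    have hc : ∀ x : G, (c b : G) * x = x * (c b : G) :=
      fun x => (Subgroup.mem_center_iff.mp (hZ (c b).2) x).symm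
    simp only [map_mul]
    push_cast
    rw [mul_assoc, ← mul_assoc (c b : G), hc (ℓ a)]
    group
  -- choose a lift for each quotient hom that admits one
  have liftex : ∀ g : W →* G ⧸ Z, ∃ ℓ : W →* G,
      (∃ ℓ' : W →* G, ∀ w, ((ℓ' w : G) : G ⧸ Z) = g w) →
      ∀ w, ((ℓ w : G) : G ⧸ Z) = g w := by
    intro g
    by_cases h : ∃ ℓ' : W →* G, ∀ w, ((ℓ' w : G) : G ⧸ Z) = g w
    · obtain ⟨ℓ', hℓ'⟩ := h; exact ⟨ℓ', fun _ => hℓ'⟩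
    · exact ⟨1, fun h' => absurd h' h⟩
  choose L hL using liftex
  -- the candidate finite set
  refine ⟨(fun p : (W →* G ⧸ Z) × (W →* Z) => (key p.2 (L p.1)).choose) '' (R1 ×ˢ R2),
    ((hR1fin.prod hR2fin).image _), ?_⟩
  intro f
  set fbar : W →* G ⧸ Z := (QuotientGroup.mk' Z).comp f with hfbar
  obtain ⟨g, hgR1, xbar, hconj⟩ := hR1 fbar
  obtain ⟨x, hx⟩ := QuotientGroup.mk_surjective xbar
  -- conjugated version of f lifting g
  set f' : W →* G := ((MulAut.conj x⁻¹).toMonoidHom.comp f) with hf'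
  have hf'w : ∀ w, f' w = x⁻¹ * f w * x := by
    intro w; simp [hf', MulAut.conj, mul_assoc]
  have hf'proj : ∀ w, ((f' w : G) : G ⧸ Z) = g w := by
    intro w
    have := hconj w
    rw [hfbar] at this
    simp only [MonoidHom.comp_apply, QuotientGroup.mk'_apply] at this
    rw [hf'w w]
    simp only [QuotientGroup.mk_mul, QuotientGroup.mk_inv, this, hx]
    group
  have hlift : ∀ w, ((L g w : G) : G ⧸ Z) = g w := hL g ⟨f', hf'proj⟩
  -- central error term
  have hmem : ∀ w : W, f' w * (L g w)⁻¹ ∈ Z := by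
    intro w
    rw [← QuotientGroup.eq_one_iff]
    simp only [QuotientGroup.mk_mul, QuotientGroup.mk_inv, hf'proj, hlift]
    group
  have hcen : ∀ w : W, ∀ y : G, (f' w * (L g w)⁻¹) * y = y * (f' w * (L g w)⁻¹) :=
    fun w y => (Subgroup.mem_center_iff.mp (hZ (hmem w)) y).symm
  set c : W →* Z :=
    { toFun := fun w => ⟨f' w * (L g w)⁻¹, hmem w⟩
      map_one' := by ext; simp
      map_mul' := by
        intro a b
        ext
        push_cast
        simp only [map_mul, mul_inv_rev]
        rw [mul_assoc (f' a), ← mul_assoc (f' b), hcen b]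
        group } with hc
  obtain ⟨c', hc'R2, s, hsS, hcs⟩ := hR2 c
  refine ⟨(key c' (L g)).choose, ⟨(g, c'), ⟨hgR1, hc'R2⟩, rfl⟩, s, hsS, x, ?_⟩
  intro w
  have hrep : (key c' (L g)).choose w = (c' w : G) * L g w := (key c' (L g)).choose_spec w
  have hcw : (c w : G) = f' w * (L g w)⁻¹ := rfl
  have hcsw : (c w : G) = (s w : G) * (c' w : G) := by
    rw [hcs w]; push_cast; ring_nf
  have : f' w = (s w : G) * (c' w : G) * L g w := by
    rw [← hcsw, hcw]; group
  have goal' : x * (s w : G) * (c' w : G) * L g w * x⁻¹ = x * f' w * x⁻¹ := by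
    rw [this]; group
  rw [hrep, ← mul_assoc, goal', hf'w w]
  group
end
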